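/- Let M be a 3-connected matroid that is not a wheel or a whirl, and let F = (e_1, …, e_k) be a maximal fan of M with k ≥ 4. Then for all i ∈ [k−1]: any triangle containing {e_i, e_{i+1}} equals {e_{i−1}, e_i, e_{i+1}} or {e_i, e_{i+1}, e_{i+2}}, and any triad containing {e_i, e_{i+1}} equals {e_{i−1}, e_i, e_{i+1}} or {e_i, e_{i+1}, e_{i+2}}. -/

import Mathlib

/-!
Write a triangle through `e i, e (i + 1)` as `T = {e i, e (i + 1), z}`; triads are triangles of
the dual matroid, and the last pair of the fan becomes the first one after reversing the fan.

In the interior of the fan one of `tri e (i - 1)`, `tri e i` is a triangle and the other a triad.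
Eliminating `e i` between `T` and that triangle gives a triangle meeting the triad in `e (i + 1)`
alone, contradicting orthogonality unless `z` is `e (i - 1)` or `e (i + 2)`.

For the first pair, if `tri e 0` is a triangle, orthogonality with the triad `tri e 1` leaves
only `z = e 3`, which would make `tri e 1` a triangle too. If `tri e 0` is a triad, a `z` outside
the fan would extend it, against maximality, and orthogonality with the triads of the fan forces
`z = e (n - 1)` with `n` even. Then the fan closes up: its even elements span it and, together
with `e 1`, cospan it, so `λ(F) ≤ 1`, and 3-connectivity makes `F` the whole ground set of a
wheel or whirl.
-/

open Matroid Set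

namespace DetPairs

variable {α : Type*}

/-- The rank of a set in a matroid: the maximum size of an independent subset
(as an integer, for convenient arithmetic). -/
noncomputable def r (M : Matroid α) (X : Set α) : ℤ :=
  ((sSup (Set.ncard '' {I | M.Indep I ∧ I ⊆ X}) : ℕ) : ℤ)

/-- The connectivity function `λ_M(X) = r(X) + r(E − X) − r(M)`. -/
noncomputable def lam (M : Matroid α) (X : Set α) : ℤ :=
  r M X + r M (M.E \ X) - r M M.E

/-- Local connectivity `⊓(X,Y) = r(X) + r(Y) − r(X ∪ Y)`. -/
noncomputable def localConn (M : Matroid α) (X Y : Set α) : ℤ :=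
  r M X + r M Y - r M (X ∪ Y)

/-- A circuit: a minimal dependent set. -/
def Circuit (M : Matroid α) (C : Set α) : Prop :=
  C ⊆ M.E ∧ ¬ M.Indep C ∧ ∀ D, D ⊂ C → M.Indep D

/-- A cocircuit: a circuit of the dual. -/
def Cocircuit (M : Matroid α) (C : Set α) : Prop := Circuit M✶ C

/-- A triangle: a 3-element circuit. -/
def Triangle (M : Matroid α) (T : Set α) : Prop := Circuit M T ∧ T.ncard = 3

/-- A triad: a 3-element cocircuit. -/
def Triad (M : Matroid α) (T : Set α) : Prop := Cocircuit M T ∧ T.ncard = 3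

/-- A quad: a 4-element set that is both a circuit and a cocircuit. -/
def Quad (M : Matroid α) (Q : Set α) : Prop :=
  Circuit M Q ∧ Cocircuit M Q ∧ Q.ncard = 4

/-- Deletion of a set of elements. -/
def Del (M : Matroid α) (D : Set α) : Matroid α := M ↾ (M.E \ D)

/-- Contraction of a set of elements. -/
def Con (M : Matroid α) (C : Set α) : Matroid α := (M✶ ↾ (M.E \ C))✶

/-- `M` is 3-connected: it has no `k`-separation for `k = 1, 2`, where a
`k`-separation is a set `X` with `λ(X) = k − 1`, `|X| ≥ k` and `|E − X| ≥ k`. -/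
def ThreeConnected (M : Matroid α) : Prop :=
  ∀ k : ℕ, 0 < k → k < 3 → ∀ X ⊆ M.E,
    ¬ (lam M X = (k : ℤ) - 1 ∧ (k : ℤ) ≤ X.ncard ∧ (k : ℤ) ≤ (M.E \ X).ncard)

/-- A detachable pair: distinct elements `e, f` such that `M \ e \ f` or
`M / e / f` is 3-connected. -/
def DetachablePair (M : Matroid α) (e f : α) : Prop :=
  e ≠ f ∧ e ∈ M.E ∧ f ∈ M.E ∧
    (ThreeConnected (Del M {e, f}) ∨ ThreeConnected (Con M {e, f}))

/-- The triple of elements with indices `i, i+1, i+2` in an ordering. -/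
def tri (e : ℕ → α) (i : ℕ) : Set α := {e i, e (i + 1), e (i + 2)}

/-- `(e 0, …, e (n-1))` is a fan ordering of length `n ≥ 3` in `M`:
consecutive triples alternate between triangles and triads. -/
def FanOrd (M : Matroid α) (n : ℕ) (e : ℕ → α) : Prop :=
  3 ≤ n ∧ Set.InjOn e (Set.Iio n) ∧ (∀ i < n, e i ∈ M.E) ∧
    (Triangle M (tri e 0) ∨ Triad M (tri e 0)) ∧
    ∀ i, i + 3 < n →
      (Triangle M (tri e i) → Triad M (tri e (i + 1))) ∧
      (Triad M (tri e i) → Triangle M (tri e (i + 1)))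

/-- A fan (as a set): either a 2-element subset of the ground set, or the
underlying set of a fan ordering of length at least 3. -/
def IsFan (M : Matroid α) (F : Set α) : Prop :=
  (F ⊆ M.E ∧ F.ncard = 2) ∨ ∃ n e, FanOrd M n e ∧ F = e '' Set.Iio n

/-- A maximal fan: a fan contained in no strictly larger fan. -/
def MaximalFan (M : Matroid α) (F : Set α) : Prop :=
  IsFan M F ∧ ∀ F', IsFan M F' → F ⊆ F' → F' = F

/-- `M` is a wheel or a whirl: its ground set has a cyclic ordering of even size
`2n` in which consecutive triples alternate between triangles and triads. -/
def IsWheelOrWhirl (M : Matroid α) : Prop :=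
  ∃ (n : ℕ) (e : ℕ → α), 2 ≤ n ∧ Set.InjOn e (Set.Iio (2 * n)) ∧
    M.E = e '' Set.Iio (2 * n) ∧
    ∀ i < 2 * n,
      (i % 2 = 0 → Triangle M {e i, e ((i + 1) % (2 * n)), e ((i + 2) % (2 * n))}) ∧
      (i % 2 = 1 → Triad M {e i, e ((i + 1) % (2 * n)), e ((i + 2) % (2 * n))})

/-- An `M(K₄)`-separator: a 6-element set `{a,b,c,x,y,z}` where `{x,y,z}` is a
triad and `{a,b,c}`, `{a,x,y}`, `{b,x,z}`, `{c,y,z}` are triangles. -/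
def MK4Sep (M : Matroid α) (S : Set α) : Prop :=
  ∃ a b c x y z : α, S = {a, b, c, x, y, z} ∧ S.ncard = 6 ∧
    Triad M {x, y, z} ∧ Triangle M {a, b, c} ∧ Triangle M {a, x, y} ∧
    Triangle M {b, x, z} ∧ Triangle M {c, y, z}

/-- A vertical 3-separation `(X, {e}, Y)` of `M`. -/
def VertThreeSep (M : Matroid α) (X : Set α) (e : α) (Y : Set α) : Prop :=
  X ∪ {e} ∪ Y = M.E ∧ Disjoint X Y ∧ e ∉ X ∧ e ∉ Y ∧
    lam M X = 2 ∧ lam M Y = 2 ∧ e ∈ M.closure X ∧ e ∈ M.closure Y ∧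
    3 ≤ r M X ∧ 3 ≤ r M Y

/-- `N` is a simplification of `M`: a restriction of `M` to a set of
representatives, one from each parallel class of nonloops. -/
def SimplificationOf (M N : Matroid α) : Prop :=
  ∃ X : Set α, (∀ x ∈ X, x ∈ M.E ∧ x ∉ M.closure ∅) ∧ N = M ↾ X ∧
    ∀ y ∈ M.E, y ∉ M.closure ∅ →
      ∃! x, x ∈ X ∧ M.closure {y} = M.closure {x}

variable {M : Matroid α} {C F I K S T X Y : Set α} {n : ℕ} {e : ℕ → α}

/-! ### Circuits and rank in terms of Mathlib's matroid API -/

lemma circuit_iff_isCircuit : Circuit M C ↔ M.IsCircuit C := by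
  rw [isCircuit_iff_forall_ssubset, Matroid.Dep]
  exact ⟨fun ⟨hE, hd, hmin⟩ => ⟨⟨hd, hE⟩, hmin⟩, fun ⟨⟨hd, hE⟩, hmin⟩ => ⟨hE, hd, hmin⟩⟩

lemma triangle_iff : Triangle M T ↔ M.IsCircuit T ∧ T.ncard = 3 := by
  rw [Triangle, circuit_iff_isCircuit]

lemma triad_iff : Triad M T ↔ M.IsCocircuit T ∧ T.ncard = 3 := by
  rw [Triad, Cocircuit, circuit_iff_isCircuit, isCocircuit_def]

lemma Triangle.isCircuit (hT : Triangle M T) : M.IsCircuit T :=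
  (triangle_iff.1 hT).1

lemma Triad.isCocircuit (hT : Triad M T) : M.IsCocircuit T :=
  (triad_iff.1 hT).1

lemma triad_dual_iff : Triad M✶ T ↔ Triangle M T := by
  rw [triad_iff, triangle_iff, dual_isCocircuit_iff]

lemma not_inter_subset_singleton {x : α} (hC : M.IsCircuit C) (hK : M.IsCocircuit K)
    (hx : x ∈ C ∩ K) : ¬ C ∩ K ⊆ {x} := fun hsub =>
  hC.inter_isCocircuit_ne_singleton hK (hsub.antisymm (singleton_subset_iff.2 hx))

lemma mem_closure_of_isCircuit {x : α} (hC : M.IsCircuit C) (hx : x ∈ C)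
    (hCX : C \ {x} ⊆ X) : x ∈ M.closure X :=
  M.closure_subset_closure hCX (hC.mem_closure_sdiff_singleton_of_mem hx)

lemma r_eq_toNat_eRk [M.RankFinite] (X : Set α) : r M X = (M.eRk X).toNat := by
  obtain ⟨I, hI⟩ := M.exists_isBasis' X
  have hmax : IsGreatest (Set.ncard '' {J | M.Indep J ∧ J ⊆ X}) I.ncard := by
    refine ⟨⟨I, ⟨hI.indep, hI.subset⟩, rfl⟩, ?_⟩
    rintro _ ⟨J, ⟨hJ, hJX⟩, rfl⟩
    rw [Set.ncard_def, Set.ncard_def]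
    exact ENat.toNat_le_toNat ((hJ.encard_le_eRk_of_subset hJX).trans hI.eRk_eq_encard.le)
      hI.indep.finite.encard_lt_top.ne
  rw [r, hmax.csSup_eq, hI.eRk_eq_encard, Set.ncard_def]

lemma eRk_eq_cast_toNat (M : Matroid α) [M.RankFinite] (X : Set α) :
    M.eRk X = ((M.eRk X).toNat : ℕ∞) :=
  (ENat.natCast_toNat (eRk_ne_top_iff.2 (M.isRkFinite_set X))).symm

lemma r_le_ncard [M.RankFinite] (hX : X.Finite) : r M X ≤ X.ncard := by
  rw [r_eq_toNat_eRk, Set.ncard_def]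
  exact_mod_cast ENat.toNat_le_toNat (M.eRk_le_encard X) hX.encard_lt_top.ne

lemma r_eq_ncard_of_indep [M.RankFinite] (hI : M.Indep I) : r M I = I.ncard := by
  rw [r_eq_toNat_eRk, hI.eRk_eq_encard, Set.ncard_def]

lemma r_mono [M.RankFinite] (h : X ⊆ Y) : r M X ≤ r M Y := by
  rw [r_eq_toNat_eRk, r_eq_toNat_eRk]
  exact_mod_cast ENat.toNat_le_toNat (M.eRk_mono h) (eRk_ne_top_iff.2 (M.isRkFinite_set Y))

lemma r_le_of_subset_closure [M.RankFinite] (h : X ⊆ M.closure Y) : r M X ≤ r M Y := by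
  refine (r_mono h).trans_eq ?_
  rw [r_eq_toNat_eRk, r_eq_toNat_eRk, eRk_closure_eq]

lemma r_union_le [M.RankFinite] : r M (X ∪ Y) ≤ r M X + r M Y := by
  have h := M.eRk_union_le_eRk_add_eRk X Y
  rw [eRk_eq_cast_toNat M X, eRk_eq_cast_toNat M Y, eRk_eq_cast_toNat M (X ∪ Y)] at h
  simp only [r_eq_toNat_eRk]
  exact_mod_cast h

lemma r_add_one_of_isCircuit [M.RankFinite] (hC : M.IsCircuit C) : r M C + 1 = C.ncard := by
  have h := hC.eRk_add_one_eq
  rw [eRk_eq_cast_toNat M C, ← hC.finite.cast_ncard_eq] at h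
  rw [r_eq_toNat_eRk]
  exact_mod_cast h

lemma r_eq_of_spanning [M.RankFinite] (hX : M.Spanning X) : r M X = r M M.E := by
  rw [r_eq_toNat_eRk, r_eq_toNat_eRk, hX.eRk_eq, eRk_ground]

lemma r_dual_add_r_ground [M.Finite] (hX : X ⊆ M.E) :
    r M✶ X + r M M.E = r M (M.E \ X) + X.ncard := by
  have h := M.eRk_dual_add_eRank X hX
  rw [← eRk_ground, eRk_eq_cast_toNat M✶ X, eRk_eq_cast_toNat M M.E,
    eRk_eq_cast_toNat M (M.E \ X), ← (M.set_finite X hX).cast_ncard_eq] at h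
  simp only [r_eq_toNat_eRk]
  exact_mod_cast h

lemma lam_eq_r_add_r_dual [M.Finite] (hX : X ⊆ M.E) :
    lam M X = r M X + r M✶ X - X.ncard := by
  have := r_dual_add_r_ground hX
  rw [lam]
  omega

lemma lam_dual [M.Finite] (hX : X ⊆ M.E) : lam M✶ X = lam M X := by
  rw [lam_eq_r_add_r_dual hX, lam_eq_r_add_r_dual (M := M✶) hX, dual_dual]
  ring

lemma lam_nonneg [M.RankFinite] (hX : X ⊆ M.E) : 0 ≤ lam M X := by
  have := r_union_le (M := M) (X := X) (Y := M.E \ X)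
  rw [union_sdiff_cancel hX] at this
  rw [lam]
  omega

lemma lam_le_r [M.RankFinite] : lam M X ≤ r M X := by
  have := r_mono (M := M) (sdiff_subset : M.E \ X ⊆ M.E)
  rw [lam]
  omega

lemma r_ground_le_of_one_le_lam [M.Finite] (hX : 1 ≤ lam M X) (hc : (M.E \ X).ncard ≤ 1) :
    r M M.E ≤ r M X := by
  have := r_le_ncard (M := M) (M.ground_finite.sdiff (t := X))
  rw [lam] at hX
  omega

/-! ### 3-connected matroids -/

namespace ThreeConnected

variable (hM : ThreeConnected M)
include hM

lemma one_le_lam [M.RankFinite] (hX : X ⊆ M.E) (h1 : 1 ≤ X.ncard)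
    (h2 : 1 ≤ (M.E \ X).ncard) : 1 ≤ lam M X := by
  have h0 := lam_nonneg (M := M) hX
  have := hM 1 one_pos (by norm_num) X hX
  push_cast at this
  omega

lemma two_le_lam [M.RankFinite] (hX : X ⊆ M.E) (h1 : 2 ≤ X.ncard)
    (h2 : 2 ≤ (M.E \ X).ncard) : 2 ≤ lam M X := by
  have h0 := lam_nonneg (M := M) hX
  have := hM 1 one_pos (by norm_num) X hX
  have := hM 2 two_pos (by norm_num) X hX
  push_cast at *
  omega

protected lemma dual [M.Finite] : ThreeConnected M✶ := by
  intro k hk hk3 X hX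
  rw [dual_ground] at hX ⊢
  rw [lam_dual hX]
  exact hM k hk hk3 X hX

lemma three_le_ncard_of_isCircuit [M.Finite] (hE : 4 ≤ M.E.ncard) (hC : M.IsCircuit C) :
    3 ≤ C.ncard := by
  by_contra! hC2
  have hr := r_add_one_of_isCircuit hC
  have hlam : lam M C ≤ r M C := lam_le_r
  have hpos : 0 < C.ncard := (ncard_pos hC.finite).2 hC.nonempty
  have hcompl := ncard_sdiff_add_ncard_of_subset hC.subset_ground M.ground_finite
  rcases (by omega : C.ncard = 1 ∨ C.ncard = 2) with h | h
  · have := hM.one_le_lam hC.subset_ground (by omega) (by omega)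
    omega
  · have := hM.two_le_lam hC.subset_ground (by omega) (by omega)
    omega

lemma three_le_ncard_of_isCocircuit [M.Finite] (hE : 4 ≤ M.E.ncard) (hK : M.IsCocircuit K) :
    3 ≤ K.ncard :=
  hM.dual.three_le_ncard_of_isCircuit hE hK

lemma indep_of_ncard_le_two [M.Finite] (hE : 4 ≤ M.E.ncard) (hX : X ⊆ M.E)
    (h2 : X.ncard ≤ 2) : M.Indep X := by
  by_contra hdep
  obtain ⟨C, hCX, hC⟩ := Matroid.Dep.exists_isCircuit_subset ⟨hdep, hX⟩
  have := hM.three_le_ncard_of_isCircuit hE hC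
  have := ncard_le_ncard hCX (M.set_finite X hX)
  omega

lemma isCircuit_of_ncard_eq_three [M.Finite] (hE : 4 ≤ M.E.ncard) (hr : r M M.E ≤ 2)
    (hT : T ⊆ M.E) (h3 : T.ncard = 3) : M.IsCircuit T := by
  refine isCircuit_iff_forall_ssubset.2 ⟨⟨fun hI => ?_, hT⟩, fun I hIT => ?_⟩
  · have := r_eq_ncard_of_indep hI
    have := r_mono (M := M) hT
    omega
  · have := ncard_lt_ncard hIT (M.set_finite T hT)
    exact hM.indep_of_ncard_le_two hE (hIT.subset.trans hT) (by omega)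

lemma triangle_and_triad [M.Finite] (hE : 4 ≤ M.E.ncard) (hr : r M M.E ≤ 2)
    (hr' : r M✶ M.E ≤ 2) (hT : T ⊆ M.E) (h3 : T.ncard = 3) : Triangle M T ∧ Triad M T :=
  ⟨triangle_iff.2 ⟨hM.isCircuit_of_ncard_eq_three hE hr hT h3, h3⟩,
    triad_iff.2 ⟨hM.dual.isCircuit_of_ncard_eq_three hE hr' hT h3, h3⟩⟩

lemma exists_ground_eq_insert [M.Finite] (hX : X ⊆ M.E) (h2 : 2 ≤ X.ncard)
    (hlam : lam M X = 1) : ∃ g ∉ X, M.E = insert g X := by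
  have hcard := ncard_sdiff_add_ncard_of_subset hX M.ground_finite
  have hc1 : (M.E \ X).ncard ≤ 1 := by
    by_contra!
    have := hM.two_le_lam hX h2 (by omega)
    omega
  have hc0 : (M.E \ X).ncard ≠ 0 := by
    intro h0
    have hEX : M.E \ X = ∅ := (ncard_eq_zero M.ground_finite.sdiff).1 h0
    have hr0 := r_le_ncard (M := M) finite_empty
    rw [lam, hEX, hX.antisymm (sdiff_eq_empty.1 hEX)] at hlam
    simp only [ncard_empty, Nat.cast_zero] at hr0
    omega
  obtain ⟨g, hg⟩ := ncard_eq_one.1 (by omega : (M.E \ X).ncard = 1)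
  refine ⟨g, fun hgX => (hg.symm.subset rfl).2 hgX, ?_⟩
  rw [← union_sdiff_cancel hX, hg, union_comm, ← insert_eq]

lemma triangle_of_triangles [M.Finite] (hE : 4 ≤ M.E.ncard) {a b c d : α}
    (h1 : Triangle M {a, b, c}) (h2 : Triangle M {a, b, d}) (hac : a ≠ c) (hbc : b ≠ c)
    (hbd : b ≠ d) (hcd : c ≠ d) : Triangle M {b, c, d} := by
  have hne : ({a, b, c} : Set α) ≠ {a, b, d} := fun heq => by
    have : c ∈ ({a, b, d} : Set α) := heq ▸ by simp
    simp only [mem_insert_iff, mem_singleton_iff] at this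
    rcases this with h | h | h
    exacts [hac h.symm, hbc h.symm, hcd h]
  obtain ⟨C, hCsub, hC⟩ := h1.isCircuit.elimination h2.isCircuit hne a
  have hsub : C ⊆ {b, c, d} := fun x hx => by
    have := hCsub hx
    simp only [mem_sdiff, mem_union, mem_insert_iff, mem_singleton_iff] at this ⊢
    tauto
  have h3 : ({b, c, d} : Set α).ncard = 3 := ncard_eq_three.2 ⟨b, c, d, hbc, hbd, hcd, rfl⟩
  have := hM.three_le_ncard_of_isCircuit hE hC
  have hCeq := eq_of_subset_of_ncard_le hsub (by omega) (toFinite _)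
  exact triangle_iff.2 ⟨hCeq ▸ hC, h3⟩

lemma eq_or_eq_of_triangle_of_triad [M.Finite] (hE : 4 ≤ M.E.ncard) {a b w w' z : α}
    (hw : Triangle M {a, b, w}) (hw' : Triad M {a, b, w'}) (hz : Triangle M {a, b, z})
    (haw : a ≠ w) (hbw : b ≠ w) (hww' : w ≠ w') (hza : z ≠ a) (hzb : z ≠ b) :
    z = w ∨ z = w' := by
  by_contra! hzw
  -- eliminating `a` leaves the triangle `{b, w, z}`, which meets the triad only in `b`
  have ht := hM.triangle_of_triangles hE hw hz haw hbw hzb.symm hzw.1.symm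
  refine not_inter_subset_singleton ht.isCircuit hw'.isCocircuit (x := b) (by simp) ?_
  rintro y ⟨hy, hy'⟩
  simp only [mem_insert_iff, mem_singleton_iff] at hy hy' ⊢
  rcases hy with rfl | rfl | rfl <;> rcases hy' with h' | h' | h' <;> simp_all

end ThreeConnected

/-! ### Fans -/

lemma triple_rotate (a b c : α) : ({a, b, c} : Set α) = {b, c, a} := by
  rw [insert_comm, pair_comm]

lemma exists_eq_triple {a b : α} (hT : T.ncard = 3) (ha : a ∈ T) (hb : b ∈ T) (hab : a ≠ b) :
    ∃ z, z ≠ a ∧ z ≠ b ∧ T = {a, b, z} := by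
  have hfin : T.Finite := finite_of_ncard_pos (by omega)
  have hsub : ({a, b} : Set α) ⊆ T := pair_subset ha hb
  have hcard := ncard_sdiff_add_ncard_of_subset hsub hfin
  rw [ncard_pair hab] at hcard
  obtain ⟨z, hz⟩ := ncard_eq_one.1 (by omega : (T \ {a, b}).ncard = 1)
  have hzT : z ∈ T \ {a, b} := hz ▸ rfl
  simp only [mem_sdiff, mem_insert_iff, mem_singleton_iff, not_or] at hzT
  refine ⟨z, hzT.2.1, hzT.2.2, ?_⟩
  rw [← union_sdiff_cancel hsub, hz, insert_union, singleton_union]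

lemma mem_tri {i : ℕ} {x : α} : x ∈ tri e i ↔ x = e i ∨ x = e (i + 1) ∨ x = e (i + 2) := by
  simp [tri]

lemma tri_eq_rotate {j : ℕ} : tri e j = {e (j + 1), e (j + 2), e j} :=
  triple_rotate _ _ _

lemma tri_reverse {i : ℕ} (hi : i + 2 < n) :
    tri (fun j => e (n - 1 - j)) i = tri e (n - 3 - i) := by
  simp only [tri]
  rw [show n - 1 - i = n - 3 - i + 2 by omega, show n - 1 - (i + 1) = n - 3 - i + 1 by omega,
    show n - 1 - (i + 2) = n - 3 - i by omega, insert_comm, pair_comm, insert_comm]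

lemma image_reverse : (fun j => e (n - 1 - j)) '' Iio n = e '' Iio n := by
  ext x
  simp only [mem_image, mem_Iio]
  constructor
  · rintro ⟨j, hj, rfl⟩
    exact ⟨n - 1 - j, by omega, rfl⟩
  · rintro ⟨i, hi, rfl⟩
    exact ⟨n - 1 - i, by omega, by rw [show n - 1 - (n - 1 - i) = i by omega]⟩

def seqCons (z : α) (e : ℕ → α) : ℕ → α
  | 0 => z
  | j + 1 => e j

lemma image_seqCons (z : α) : seqCons z e '' Iio (n + 1) = insert z (e '' Iio n) := by
  ext x
  simp only [mem_image, mem_Iio, mem_insert_iff]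
  constructor
  · rintro ⟨_ | i, hi, rfl⟩
    exacts [Or.inl rfl, Or.inr ⟨i, by omega, rfl⟩]
  · rintro (rfl | ⟨i, hi, rfl⟩)
    exacts [⟨0, by omega, rfl⟩, ⟨i + 1, by omega, rfl⟩]

lemma Triangle.mem_closure_tri {j : ℕ} (ht : Triangle M (tri e j)) (h1 : e j ∈ X)
    (h2 : e (j + 2) ∈ X) : e (j + 1) ∈ M.closure X := by
  refine mem_closure_of_isCircuit ht.isCircuit (mem_tri.2 (Or.inr (Or.inl rfl))) ?_
  rintro y ⟨hy, hne⟩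
  rcases mem_tri.1 hy with rfl | rfl | rfl
  exacts [h1, absurd rfl hne, h2]

lemma Triad.mem_dual_closure_tri {j : ℕ} (ht : Triad M (tri e j)) (h1 : e j ∈ X)
    (h2 : e (j + 1) ∈ X) : e (j + 2) ∈ M✶.closure X := by
  refine mem_closure_of_isCircuit ht.isCocircuit (mem_tri.2 (Or.inr (Or.inr rfl))) ?_
  rintro y ⟨hy, hne⟩
  rcases mem_tri.1 hy with rfl | rfl | rfl
  exacts [h1, h2, absurd rfl hne]

namespace FanOrd

variable (h : FanOrd M n e)
include h

lemma three_le : 3 ≤ n := h.1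

lemma injOn : InjOn e (Iio n) := h.2.1

lemma ne {i j : ℕ} (hi : i < n) (hj : j < n) (hij : i ≠ j) : e i ≠ e j :=
  fun he => hij (h.injOn hi hj he)

lemma mem_ground {i : ℕ} (hi : i < n) : e i ∈ M.E := h.2.2.1 i hi

lemma image_subset_ground : e '' Iio n ⊆ M.E := by
  rintro _ ⟨i, hi, rfl⟩
  exact h.mem_ground hi

lemma ncard_image : (e '' Iio n).ncard = n := by
  rw [h.injOn.ncard_image, ncard_Iio_nat]

lemma le_ncard_ground [M.Finite] : n ≤ M.E.ncard :=
  h.ncard_image ▸ ncard_le_ncard h.image_subset_ground M.ground_finite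

lemma triangle_succ {j : ℕ} (hj : j + 3 < n) (ht : Triad M (tri e j)) :
    Triangle M (tri e (j + 1)) :=
  (h.2.2.2.2 j hj).2 ht

lemma triad_succ {j : ℕ} (hj : j + 3 < n) (ht : Triangle M (tri e j)) :
    Triad M (tri e (j + 1)) :=
  (h.2.2.2.2 j hj).1 ht

lemma triangle_or_triad {j : ℕ} (hj : j + 2 < n) :
    Triangle M (tri e j) ∨ Triad M (tri e j) := by
  induction j with
  | zero => exact h.2.2.2.1
  | succ j ih =>
    exact (ih (by omega)).symm.imp (h.triangle_succ (by omega)) (h.triad_succ (by omega))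

lemma parity (h0 : Triangle M (tri e 0)) {j : ℕ} (hj : j + 2 < n) :
    (j % 2 = 0 → Triangle M (tri e j)) ∧ (j % 2 = 1 → Triad M (tri e j)) := by
  induction j with
  | zero => exact ⟨fun _ => h0, by omega⟩
  | succ j ih =>
    exact ⟨fun _ => h.triangle_succ (by omega) ((ih (by omega)).2 (by omega)),
      fun _ => h.triad_succ (by omega) ((ih (by omega)).1 (by omega))⟩

protected lemma dual : FanOrd M✶ n e := by
  refine ⟨h.three_le, h.injOn, fun i hi => h.mem_ground hi, ?_, fun j hj => ?_⟩
  · rw [triad_dual_iff]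
    exact h.2.2.2.1.symm
  · simp only [triad_dual_iff]
    exact ⟨h.triangle_succ hj, h.triad_succ hj⟩

lemma isWheelOrWhirl (hev : n % 2 = 0) (hE : M.E = e '' Iio n) (h0 : Triangle M (tri e 0))
    (hT : Triangle M {e (n - 2), e (n - 1), e 0}) (hD : Triad M {e (n - 1), e 0, e 1}) :
    IsWheelOrWhirl M := by
  have hn := h.three_le
  have h2n : 2 * (n / 2) = n := by omega
  refine ⟨n / 2, e, by omega, by rw [h2n]; exact h.injOn, by rw [h2n, hE], fun i hi => ?_⟩
  rw [h2n] at hi ⊢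
  by_cases hi2 : i + 2 < n
  · rw [Nat.mod_eq_of_lt (by omega : i + 1 < n), Nat.mod_eq_of_lt hi2]
    exact h.parity h0 hi2
  rcases (by omega : i = n - 2 ∨ i = n - 1) with rfl | rfl
  · rw [show n - 2 + 1 = n - 1 by omega, Nat.mod_eq_of_lt (by omega : n - 1 < n),
      show n - 2 + 2 = n by omega, Nat.mod_self]
    exact ⟨fun _ => hT, by omega⟩
  · rw [show n - 1 + 1 = n by omega, Nat.mod_self, show n - 1 + 2 = n + 1 by omega,
      Nat.add_mod_left, Nat.mod_eq_of_lt (by omega : 1 < n)]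
    exact ⟨by omega, fun _ => hD⟩

end FanOrd

lemma isWheelOrWhirl_of_ground_eq {g a b c : α} (hE : M.E = {g, a, b, c})
    (hga : g ≠ a) (hgb : g ≠ b) (hgc : g ≠ c) (hab : a ≠ b) (hac : a ≠ c) (hbc : b ≠ c)
    (hall : ∀ T ⊆ M.E, T.ncard = 3 → Triangle M T ∧ Triad M T) : IsWheelOrWhirl M := by
  have hmem : g ∈ M.E ∧ a ∈ M.E ∧ b ∈ M.E ∧ c ∈ M.E := by simp [hE]
  obtain ⟨hgE, haE, hbE, hcE⟩ := hmem
  have htri : ∀ x y z, x ∈ M.E → y ∈ M.E → z ∈ M.E → x ≠ y → x ≠ z → y ≠ z →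
      Triangle M {x, y, z} ∧ Triad M {x, y, z} := fun x y z hx hy hz hxy hxz hyz =>
    hall _ (by simp only [insert_subset_iff, singleton_subset_iff]; exact ⟨hx, hy, hz⟩)
      (ncard_eq_three.2 ⟨x, y, z, hxy, hxz, hyz, rfl⟩)
  let f : ℕ → α := fun | 0 => g | 1 => a | 2 => b | _ => c
  have hf : FanOrd M 4 f := by
    refine ⟨by norm_num, fun i hi j hj hij => ?_, fun i hi => ?_,
      Or.inl (htri g a b hgE haE hbE hga hgb hab).1, fun i hi => ?_⟩
    · simp only [mem_Iio] at hi hj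
      interval_cases i <;> interval_cases j <;> first | rfl |
        (simp only [f] at hij; first | exact absurd hij ‹_› | exact absurd hij.symm ‹_›)
    · interval_cases i <;> assumption
    · obtain rfl : i = 0 := by omega
      have h1 := htri a b c haE hbE hcE hab hac hbc
      exact ⟨fun _ => h1.2, fun _ => h1.1⟩
  refine hf.isWheelOrWhirl (by norm_num) ?_ (htri g a b hgE haE hbE hga hgb hab).1
    (htri b c g hbE hcE hgE hbc hgb.symm hgc.symm).1
    (htri c g a hcE hgE haE hgc.symm hac.symm hga).2
  rw [hE]
  ext x
  simp only [mem_insert_iff, mem_singleton_iff, mem_image, mem_Iio]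
  constructor
  · rintro (rfl | rfl | rfl | rfl)
    exacts [⟨0, by norm_num, rfl⟩, ⟨1, by norm_num, rfl⟩, ⟨2, by norm_num, rfl⟩,
      ⟨3, by norm_num, rfl⟩]
  · rintro ⟨i, hi, rfl⟩
    interval_cases i <;> simp [f]

/-- A set that is both a triangle and a triad forces `M ≅ U₂,₄`, the rank-2 whirl. -/
lemma ThreeConnected.isWheelOrWhirl_of_triangle_of_triad [M.Finite] (hM : ThreeConnected M)
    (hS : Triangle M S) (hS' : Triad M S) : IsWheelOrWhirl M := by
  have hSE := hS.isCircuit.subset_ground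
  have hr := r_add_one_of_isCircuit hS.isCircuit
  have hr' := r_add_one_of_isCircuit (M := M✶) hS'.isCocircuit
  rw [hS.2] at hr hr'
  have hlam : lam M S = 1 := by rw [lam_eq_r_add_r_dual hSE, hS.2]; omega
  obtain ⟨g, hgS, hE⟩ := hM.exists_ground_eq_insert hSE (by rw [hS.2]; norm_num) hlam
  have hc1 : (M.E \ S).ncard ≤ 1 := by
    rw [hE, insert_sdiff_of_notMem _ hgS, sdiff_self, insert_empty_eq, ncard_singleton]
  have hrE := r_ground_le_of_one_le_lam hlam.ge hc1
  have hrE' := r_ground_le_of_one_le_lam (M := M✶) (by rw [lam_dual hSE, hlam]) hc1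
  rw [dual_ground] at hrE'
  have hE4 : M.E.ncard = 4 := by rw [hE, ncard_insert_of_notMem hgS (M.set_finite S hSE), hS.2]
  obtain ⟨a, b, c, hab, hac, hbc, rfl⟩ := ncard_eq_three.1 hS.2
  simp only [mem_insert_iff, mem_singleton_iff, not_or] at hgS
  exact isWheelOrWhirl_of_ground_eq hE hgS.1 hgS.2.1 hgS.2.2 hab hac hbc
    fun T hT h3 => hM.triangle_and_triad hE4.ge (by omega) (by omega) hT h3

namespace FanOrd

variable (h : FanOrd M n e)
include h

/-- `FanOrd` only constrains each triple by its predecessor, so reading a fan backwards relies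
on no triangle being a triad. -/
lemma reverse [M.Finite] (hM : ThreeConnected M) (hW : ¬ IsWheelOrWhirl M) :
    FanOrd M n (fun j => e (n - 1 - j)) := by
  have hn := h.three_le
  have hnb : ∀ T, Triangle M T → ¬ Triad M T :=
    fun T h1 h2 => hW (hM.isWheelOrWhirl_of_triangle_of_triad h1 h2)
  refine ⟨hn, fun i hi j hj hij => ?_, fun i hi => h.mem_ground (by omega), ?_, fun i hi => ?_⟩
  · simp only [mem_Iio] at hi hj
    have := h.injOn (show n - 1 - i < n by omega) (show n - 1 - j < n by omega) hij
    omega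
  · rw [tri_reverse (by omega)]
    exact h.triangle_or_triad (by omega)
  obtain ⟨j, hj⟩ : ∃ j, n - 3 - i = j + 1 := ⟨n - 4 - i, by omega⟩
  rw [tri_reverse (by omega), tri_reverse (by omega), hj, show n - 3 - (i + 1) = j by omega]
  rcases h.triangle_or_triad (j := j) (by omega) with ht | ht
  · exact ⟨fun ht' => absurd (h.triad_succ (by omega) ht) (hnb _ ht'), fun _ => ht⟩
  · exact ⟨fun _ => ht, fun ht' => absurd ht' (hnb _ (h.triangle_succ (by omega) ht))⟩

lemma cons {z : α} (hz : z ∈ M.E) (hzF : z ∉ e '' Iio n) (hT : Triangle M {z, e 0, e 1})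
    (hT' : ¬ Triad M {z, e 0, e 1}) (h0 : Triad M (tri e 0)) :
    FanOrd M (n + 1) (seqCons z e) := by
  have hn := h.three_le
  refine ⟨by omega, ?_, ?_, Or.inl hT, ?_⟩
  · rintro (_ | i) hi (_ | j) hj hij
    · rfl
    · exact absurd ⟨j, by simp only [mem_Iio] at hj ⊢; omega, hij.symm⟩ hzF
    · exact absurd ⟨i, by simp only [mem_Iio] at hi ⊢; omega, hij⟩ hzF
    · simp only [mem_Iio] at hi hj
      rw [h.injOn (show i < n by omega) (show j < n by omega) hij]
  · rintro (_ | i) hi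
    exacts [hz, h.mem_ground (by omega)]
  · rintro (_ | i) hi
    exacts [⟨fun _ => h0, fun h' => absurd h' hT'⟩,
      ⟨h.triad_succ (by omega), h.triangle_succ (by omega)⟩]

end FanOrd

/-! ### A fan that closes up is a wheel or a whirl -/

def fanEvens (e : ℕ → α) (n : ℕ) : Set α := (fun k => e (2 * k)) '' Iio (n / 2)

lemma mem_fanEvens {i : ℕ} (hi : i + 1 < n) (hev : i % 2 = 0) : e i ∈ fanEvens e n :=
  ⟨i / 2, by simp only [mem_Iio]; omega, by simp only; congr 1; omega⟩

lemma fanEvens_subset : fanEvens e n ⊆ e '' Iio n := by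
  rintro _ ⟨k, hk, rfl⟩
  exact ⟨2 * k, by simp only [mem_Iio] at hk ⊢; omega, rfl⟩

namespace FanOrd

variable (h : FanOrd M n e)
include h

lemma ncard_fanEvens : (fanEvens e n).ncard = n / 2 := by
  rw [fanEvens, InjOn.ncard_image, ncard_Iio_nat]
  intro i hi j hj hij
  simp only [mem_Iio] at hi hj
  have := h.injOn (show 2 * i < n by omega) (show 2 * j < n by omega) hij
  omega

lemma notMem_fanEvens {i : ℕ} (hi : i < n) (hodd : i % 2 = 1) : e i ∉ fanEvens e n := by
  rintro ⟨k, hk, hki⟩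
  simp only [mem_Iio] at hk
  exact h.ne (by omega) hi (by omega) hki

/-- Orthogonality with the triad `tri e (2k-1)` keeps a circuit that avoids the odd fan elements
away from every even fan element other than `e 0`. -/
lemma subset_insert_of_isCircuit (h0 : Triangle M (tri e 0)) (hC : M.IsCircuit C)
    (hCX : C ⊆ X ∪ fanEvens e n) (hX : Disjoint X (e '' Iio n)) : C ⊆ insert (e 0) X := by
  have hodd : ∀ i < n, i % 2 = 1 → e i ∉ C := fun i hi hodd hiC =>
    (hCX hiC).elim (fun hiX => hX.notMem_of_mem_left hiX (mem_image_of_mem e hi))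
      (h.notMem_fanEvens hi hodd)
  intro x hx
  rcases hCX hx with hxX | ⟨_ | k, hk, rfl⟩
  · exact Or.inr hxX
  · exact Or.inl rfl
  simp only [mem_Iio] at hk
  have hx' : e (2 * k + 1 + 1) ∈ C := by rw [show 2 * k + 1 + 1 = 2 * (k + 1) by ring]; exact hx
  exfalso
  have ht := (h.parity h0 (j := 2 * k + 1) (by omega)).2 (by omega)
  refine not_inter_subset_singleton hC ht.isCocircuit ⟨hx', mem_tri.2 (Or.inr (Or.inl rfl))⟩ ?_
  rintro y ⟨hyC, hy⟩
  rcases mem_tri.1 hy with rfl | rfl | rfl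
  · exact absurd hyC (hodd _ (by omega) (by omega))
  · rfl
  · exact absurd hyC (hodd _ (by omega) (by omega))

lemma indep_union_fanEvens [M.Finite] (hM : ThreeConnected M) (hE : 4 ≤ M.E.ncard)
    (h0 : Triangle M (tri e 0)) (hXE : X ⊆ M.E) (hX : Disjoint X (e '' Iio n))
    (hX1 : X.ncard ≤ 1) : M.Indep (X ∪ fanEvens e n) := by
  by_contra hdep
  obtain ⟨C, hCX, hC⟩ := Matroid.Dep.exists_isCircuit_subset
    ⟨hdep, union_subset hXE (fanEvens_subset.trans h.image_subset_ground)⟩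
  have hC0 := h.subset_insert_of_isCircuit h0 hC hCX hX
  have := (ncard_le_ncard hC0 ((M.set_finite X hXE).insert _)).trans (ncard_insert_le _ _)
  have := hM.three_le_ncard_of_isCircuit hE hC
  omega

lemma image_subset_closure_fanEvens (hev : n % 2 = 0) (h0 : Triangle M (tri e 0))
    (hT : Triangle M {e (n - 2), e (n - 1), e 0}) : e '' Iio n ⊆ M.closure (fanEvens e n) := by
  have hn := h.three_le
  rintro _ ⟨i, hi, rfl⟩
  simp only [mem_Iio] at hi
  rcases Nat.mod_two_eq_zero_or_one i with hi2 | hi2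
  · exact M.subset_closure _ (fanEvens_subset.trans h.image_subset_ground)
      (mem_fanEvens (by omega) hi2)
  obtain ⟨j, rfl⟩ : ∃ j, i = j + 1 := ⟨i - 1, by omega⟩
  by_cases hj : j + 2 < n
  · exact ((h.parity h0 hj).1 (by omega)).mem_closure_tri (mem_fanEvens (by omega) (by omega))
      (mem_fanEvens (by omega) (by omega))
  obtain rfl : j = n - 2 := by omega
  rw [show n - 1 = n - 2 + 1 by omega] at hT
  refine mem_closure_of_isCircuit hT.isCircuit (mem_insert_of_mem _ (mem_insert _ _)) ?_
  rintro y ⟨hy, hne⟩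
  rcases hy with rfl | rfl | rfl
  exacts [mem_fanEvens (by omega) (by omega), absurd rfl hne, mem_fanEvens (by omega) rfl]

lemma image_subset_dual_closure (hev : n % 2 = 0) (h0 : Triangle M (tri e 0)) :
    e '' Iio n ⊆ M✶.closure (insert (e 1) (fanEvens e n)) := by
  have hn := h.three_le
  set S := insert (e 1) (fanEvens e n)
  have hSE : S ⊆ M✶.E :=
    insert_subset (h.mem_ground (by omega)) (fanEvens_subset.trans h.image_subset_ground)
  have hS : ∀ i, i + 1 < n → i % 2 = 0 → e i ∈ M✶.closure S := fun i hi hi2 =>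
    M✶.subset_closure S hSE (mem_insert_of_mem _ (mem_fanEvens hi hi2))
  rintro _ ⟨i, hi, rfl⟩
  simp only [mem_Iio] at hi
  induction i using Nat.strong_induction_on with
  | _ i ih =>
  rcases i with _ | _ | j
  · exact hS 0 (by omega) rfl
  · exact M✶.subset_closure S hSE (mem_insert _ _)
  rcases Nat.mod_two_eq_zero_or_one j with hj | hj
  · exact hS _ (by omega) (by omega)
  have ht := (h.parity h0 (j := j) (by omega)).2 hj
  rw [← M✶.closure_closure S]
  exact ht.mem_dual_closure_tri (ih j (by omega) (by omega)) (hS _ (by omega) (by omega))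

lemma ground_sdiff_subset_closure (hev : n % 2 = 0) (h0 : Triangle M (tri e 0))
    (hE : M.E = e '' Iio n) :
    M.E \ {e (n - 1), e 0, e 1} ⊆ M.closure (fanEvens e n \ {e 0}) := by
  have hn := h.three_le
  have hV0 : ∀ i, 2 ≤ i → i + 1 < n → i % 2 = 0 → e i ∈ fanEvens e n \ {e 0} :=
    fun i hi2 hi hev => ⟨mem_fanEvens hi hev, h.ne (by omega) (by omega) (by omega)⟩
  rintro _ ⟨hxE, hxD⟩
  rw [hE] at hxE
  obtain ⟨i, hi, rfl⟩ := hxE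
  simp only [mem_Iio] at hi
  simp only [mem_insert_iff, mem_singleton_iff, not_or] at hxD
  obtain ⟨hi1, hi0, hi1'⟩ := hxD
  have : i ≠ n - 1 ∧ i ≠ 0 ∧ i ≠ 1 :=
    ⟨ne_of_apply_ne e hi1, ne_of_apply_ne e hi0, ne_of_apply_ne e hi1'⟩
  rcases Nat.mod_two_eq_zero_or_one i with hi2 | hi2
  · exact M.subset_closure _ (sdiff_subset.trans (fanEvens_subset.trans h.image_subset_ground))
      (hV0 i (by omega) (by omega) hi2)
  obtain ⟨j, rfl⟩ : ∃ j, i = j + 1 := ⟨i - 1, by omega⟩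
  exact ((h.parity h0 (j := j) (by omega)).1 (by omega)).mem_closure_tri
    (hV0 j (by omega) (by omega) (by omega)) (hV0 (j + 2) (by omega) (by omega) (by omega))

/-- The three wrap-around elements are the complement of the hyperplane spanned by the even
elements other than `e 0`. -/
lemma triad_wrap [M.Finite] (hM : ThreeConnected M) (hE4 : 4 ≤ M.E.ncard) (hev : n % 2 = 0)
    (h0 : Triangle M (tri e 0)) (hE : M.E = e '' Iio n) : Triad M {e (n - 1), e 0, e 1} := by
  have hn := h.three_le
  set D : Set α := {e (n - 1), e 0, e 1}
  have hDE : D ⊆ M.E := by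
    simp only [D, insert_subset_iff, singleton_subset_iff]
    exact ⟨h.mem_ground (by omega), h.mem_ground (by omega), h.mem_ground (by omega)⟩
  have hD3 : D.ncard = 3 := ncard_eq_three.2 ⟨_, _, _, h.ne (by omega) (by omega) (by omega),
    h.ne (by omega) (by omega) (by omega), h.ne (by omega) (by omega) (by omega), rfl⟩
  have hV := h.indep_union_fanEvens hM hE4 h0 (empty_subset _) (empty_disjoint _) (by simp)
  rw [empty_union] at hV
  have hrH : r M (M.E \ D) < r M M.E := by
    have h1 : r M (M.E \ D) ≤ (fanEvens e n \ {e 0}).ncard :=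
      (r_le_of_subset_closure (h.ground_sdiff_subset_closure hev h0 hE)).trans
      (r_le_ncard (hV.finite.sdiff (t := {e 0})))
    have h2 : (fanEvens e n \ {e 0}).ncard + 1 = (fanEvens e n).ncard :=
      ncard_sdiff_singleton_add_one (mem_fanEvens (i := 0) (by omega) rfl) hV.finite
    have h3 := r_mono (M := M) (fanEvens_subset.trans h.image_subset_ground)
    rw [r_eq_ncard_of_indep hV] at h3
    omega
  have hdep : ¬ M.Coindep D := by
    rw [coindep_iff_compl_spanning hDE]
    exact fun hsp => (r_eq_of_spanning hsp ▸ hrH).false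
  obtain ⟨K, hKD, hK⟩ := Matroid.Dep.exists_isCircuit_subset (M := M✶) ⟨hdep, hDE⟩
  have := hM.three_le_ncard_of_isCocircuit hE4 hK
  rw [eq_of_subset_of_ncard_le hKD (by omega) (M.set_finite D hDE)] at hK
  exact triad_iff.2 ⟨hK, hD3⟩

lemma r_image_le [M.Finite] (hev : n % 2 = 0) (h0 : Triangle M (tri e 0))
    (hT : Triangle M {e (n - 2), e (n - 1), e 0}) : r M (e '' Iio n) ≤ n / 2 := by
  have hVE := fanEvens_subset.trans h.image_subset_ground
  have := (r_le_of_subset_closure (h.image_subset_closure_fanEvens hev h0 hT)).trans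
    (r_le_ncard (M.set_finite _ hVE))
  rwa [h.ncard_fanEvens] at this

lemma r_dual_image_le [M.Finite] (hev : n % 2 = 0) (h0 : Triangle M (tri e 0)) :
    r M✶ (e '' Iio n) ≤ n / 2 + 1 := by
  have hVE := fanEvens_subset.trans h.image_subset_ground
  have := (r_le_of_subset_closure (h.image_subset_dual_closure hev h0)).trans
    (r_le_ncard ((M.set_finite _ hVE).insert (e 1)))
  have := ncard_insert_le (e 1) (fanEvens e n)
  rw [h.ncard_fanEvens] at this
  omega

lemma isWheelOrWhirl_of_triangle_wrap [M.Finite] (hM : ThreeConnected M) (hn : 4 ≤ n)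
    (hev : n % 2 = 0) (h0 : Triangle M (tri e 0)) (hT : Triangle M {e (n - 2), e (n - 1), e 0}) :
    IsWheelOrWhirl M := by
  have hE4 : 4 ≤ M.E.ncard := hn.trans h.le_ncard_ground
  have hFE := h.image_subset_ground
  have hrF := h.r_image_le hev h0 hT
  have hlam : lam M (e '' Iio n) ≤ 1 := by
    have := h.r_dual_image_le hev h0
    rw [lam_eq_r_add_r_dual hFE, h.ncard_image]
    omega
  have hcard := ncard_sdiff_add_ncard_of_subset hFE M.ground_finite
  have hc : (M.E \ e '' Iio n).ncard ≤ 1 := by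
    by_contra!
    have := hM.two_le_lam hFE (by rw [h.ncard_image]; omega) (by omega)
    omega
  rcases Nat.le_one_iff_eq_zero_or_eq_one.1 hc with hc0 | hc1
  · have hE : M.E = e '' Iio n :=
      (sdiff_eq_empty.1 ((ncard_eq_zero M.ground_finite.sdiff).1 hc0)).antisymm hFE
    exact h.isWheelOrWhirl hev hE h0 hT (h.triad_wrap hM hE4 hev h0 hE)
  obtain ⟨g, hg⟩ := ncard_eq_one.1 hc1
  have hgE : g ∈ M.E \ e '' Iio n := hg ▸ rfl
  have hrE := r_ground_le_of_one_le_lam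
    (hM.one_le_lam hFE (by rw [h.ncard_image]; omega) (by omega)) hc
  have hVg := h.indep_union_fanEvens hM hE4 h0 (singleton_subset_iff.2 hgE.1)
    (disjoint_singleton_left.2 hgE.2) (by simp)
  have hrVg := r_mono (M := M) (union_subset (singleton_subset_iff.2 hgE.1)
    (fanEvens_subset.trans hFE))
  rw [r_eq_ncard_of_indep hVg, ← insert_eq, ncard_insert_of_notMem
    (fun hgV => hgE.2 (fanEvens_subset hgV)) (hVg.finite.subset (subset_union_right)),
    h.ncard_fanEvens] at hrVg
  omega

end FanOrd

/-! ### Triangles through two consecutive fan elements -/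

namespace FanOrd

variable (h : FanOrd M n e)
include h

lemma eq_of_triangle_zero [M.Finite] (hM : ThreeConnected M) (hW : ¬ IsWheelOrWhirl M)
    (hn : 4 ≤ n) (h0 : Triangle M (tri e 0)) {z : α} (hT : Triangle M {e 0, e 1, z}) :
    z = e 2 := by
  have hE4 : 4 ≤ M.E.ncard := hn.trans h.le_ncard_ground
  have h1 := h.triad_succ (j := 0) (by omega) h0
  by_contra hz2
  by_cases hz3 : z = e 3
  · subst hz3
    exact hW (hM.isWheelOrWhirl_of_triangle_of_triad (hM.triangle_of_triangles hE4 h0 hT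
      (h.ne (by omega) (by omega) (by omega)) (h.ne (by omega) (by omega) (by omega))
      (h.ne (by omega) (by omega) (by omega)) (h.ne (by omega) (by omega) (by omega))) h1)
  refine not_inter_subset_singleton hT.isCircuit h1.isCocircuit (x := e 1) (by simp [tri]) ?_
  rintro y ⟨hy, hy'⟩
  rcases mem_tri.1 hy' with rfl | rfl | rfl
  · rfl
  all_goals
    exfalso
    simp only [mem_insert_iff, mem_singleton_iff] at hy
    rcases hy with h' | h' | h'
  all_goals first | exact hz2 h'.symm | exact hz3 h'.symm |
    exact h.ne (by omega) (by omega) (by omega) h'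

/-- By orthogonality with the triads `tri e j` (`j ≥ 2` even), the triangle `{e 0, e 1, z}` can
meet the fan again only in `e (n - 1)` with `n` even; the reversed fan then closes up. -/
lemma notMem_image_of_triad_zero [M.Finite] (hM : ThreeConnected M) (hW : ¬ IsWheelOrWhirl M)
    (hn : 4 ≤ n) (h0 : Triad M (tri e 0)) {z : α} (hT : Triangle M {e 0, e 1, z})
    (hz0 : z ≠ e 0) (hz1 : z ≠ e 1) (hz2 : z ≠ e 2) : z ∉ e '' Iio n := by
  rintro ⟨m, hm, rfl⟩
  simp only [mem_Iio] at hm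
  have hm3 : 3 ≤ m := by
    by_contra!
    interval_cases m <;> simp_all
  have hend : m = n - 1 ∧ n % 2 = 0 := by
    by_contra hmn
    obtain ⟨j, hj2, hjn, hjev, hjm⟩ : ∃ j, 2 ≤ j ∧ j + 2 < n ∧ j % 2 = 0 ∧ e m ∈ tri e j := by
      rcases Nat.mod_two_eq_zero_or_one m with hm2 | hm2
      · exact ⟨m - 2, by omega, by omega, by omega,
          mem_tri.2 (Or.inr (Or.inr (by rw [show m - 2 + 2 = m by omega])))⟩
      · exact ⟨m - 1, by omega, by omega, by omega,
          mem_tri.2 (Or.inr (Or.inl (by rw [show m - 1 + 1 = m by omega])))⟩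
    have hK : Triad M (tri e j) := (h.dual.parity h0 hjn).1 hjev
    refine not_inter_subset_singleton hT.isCircuit hK.isCocircuit ⟨by simp, hjm⟩ ?_
    rintro y ⟨hy, hy'⟩
    simp only [mem_insert_iff, mem_singleton_iff] at hy
    rcases hy with rfl | rfl | rfl
    all_goals first | rfl | exfalso
    all_goals rcases mem_tri.1 hy' with h' | h' | h' <;>
      exact h.ne (by omega) (by omega) (by omega) h'
  obtain ⟨rfl, hev⟩ := hend
  refine hW ((h.reverse hM hW).isWheelOrWhirl_of_triangle_wrap hM hn hev ?_ ?_)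
  · rw [tri_reverse (by omega)]
    exact triad_dual_iff.1 ((h.dual.parity h0 (j := n - 3 - 0) (by omega)).2 (by omega))
  · rw [show n - 1 - (n - 2) = 1 by omega, show n - 1 - (n - 1) = 0 by omega, Nat.sub_zero,
      insert_comm]
    exact hT

lemma eq_of_triad_zero [M.Finite] (hM : ThreeConnected M) (hW : ¬ IsWheelOrWhirl M)
    (hmax : MaximalFan M (e '' Iio n)) (hn : 4 ≤ n) (h0 : Triad M (tri e 0)) {z : α}
    (hT : Triangle M {e 0, e 1, z}) (hz0 : z ≠ e 0) (hz1 : z ≠ e 1) : z = e 2 := by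
  by_contra hz2
  have hzF := h.notMem_image_of_triad_zero hM hW hn h0 hT hz0 hz1 hz2
  rw [triple_rotate, triple_rotate] at hT
  have hfan : IsFan M (insert z (e '' Iio n)) :=
    Or.inr ⟨n + 1, seqCons z e, h.cons (hT.isCircuit.subset_ground (by simp)) hzF hT
      (fun hT' => hW (hM.isWheelOrWhirl_of_triangle_of_triad hT hT')) h0, (image_seqCons z).symm⟩
  exact hzF (hmax.2 _ hfan (subset_insert _ _) ▸ mem_insert z _)

lemma triangle_eq_of_mem_of_add_two_lt [M.Finite] (hM : ThreeConnected M)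
    (hW : ¬ IsWheelOrWhirl M) (hmax : MaximalFan M (e '' Iio n)) (hn : 4 ≤ n) {i : ℕ}
    (hi : i + 2 < n) (hT : Triangle M T) (h1 : e i ∈ T) (h2 : e (i + 1) ∈ T) :
    (1 ≤ i ∧ T = {e (i - 1), e i, e (i + 1)}) ∨ T = tri e i := by
  have hE4 : 4 ≤ M.E.ncard := hn.trans h.le_ncard_ground
  have hne : ∀ {p q : ℕ}, p < n → q < n → p ≠ q → e p ≠ e q := h.ne
  obtain ⟨z, hzi, hzi1, rfl⟩ := exists_eq_triple hT.2 h1 h2 (hne (by omega) (by omega) (by omega))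
  obtain rfl | ⟨j, rfl⟩ : i = 0 ∨ ∃ j, i = j + 1 := by
    rcases i with _ | j
    exacts [Or.inl rfl, Or.inr ⟨j, rfl⟩]
  · simp only [Nat.zero_add] at hT hzi1
    suffices z = e 2 by rw [this]; exact Or.inr rfl
    rcases h.triangle_or_triad (j := 0) (by omega) with h0 | h0
    exacts [h.eq_of_triangle_zero hM hW hn h0 hT, h.eq_of_triad_zero hM hW hmax hn h0 hT hzi hzi1]
  rcases h.triangle_or_triad (j := j) (by omega) with ht | ht
  · rw [tri_eq_rotate] at ht
    rcases hM.eq_or_eq_of_triangle_of_triad hE4 ht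
      (h.triad_succ (by omega) (by rwa [tri_eq_rotate])) hT (hne (by omega) (by omega) (by omega))
      (hne (by omega) (by omega) (by omega)) (hne (by omega) (by omega) (by omega)) hzi hzi1
      with rfl | rfl
    · exact Or.inl ⟨by omega, by rw [Nat.add_sub_cancel, tri_eq_rotate.symm]; rfl⟩
    · exact Or.inr rfl
  · rw [tri_eq_rotate] at ht
    rcases hM.eq_or_eq_of_triangle_of_triad hE4
      (h.triangle_succ (by omega) (by rwa [tri_eq_rotate])) ht hT
      (hne (by omega) (by omega) (by omega)) (hne (by omega) (by omega) (by omega))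
      (hne (by omega) (by omega) (by omega)) hzi hzi1 with rfl | rfl
    · exact Or.inr rfl
    · exact Or.inl ⟨by omega, by rw [Nat.add_sub_cancel, tri_eq_rotate.symm]; rfl⟩

lemma triangle_eq_of_mem [M.Finite] (hM : ThreeConnected M) (hW : ¬ IsWheelOrWhirl M)
    (hmax : MaximalFan M (e '' Iio n)) (hn : 4 ≤ n) {i : ℕ} (hi : i + 1 < n)
    (hT : Triangle M T) (h1 : e i ∈ T) (h2 : e (i + 1) ∈ T) :
    (1 ≤ i ∧ T = {e (i - 1), e i, e (i + 1)}) ∨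
      (i + 2 < n ∧ T = {e i, e (i + 1), e (i + 2)}) := by
  by_cases hi2 : i + 2 < n
  · exact (h.triangle_eq_of_mem_of_add_two_lt hM hW hmax hn hi2 hT h1 h2).imp_right (⟨hi2, ·⟩)
  obtain rfl : i = n - 2 := by omega
  rw [← image_reverse] at hmax
  rcases (h.reverse hM hW).triangle_eq_of_mem_of_add_two_lt hM hW hmax hn (i := 0) (by omega) hT
    (by rwa [show n - 1 - 0 = n - 2 + 1 by omega]) (by rwa [show n - 1 - (0 + 1) = n - 2 by omega])
    with ⟨h0, -⟩ | hTeq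
  · omega
  refine Or.inl ⟨by omega, ?_⟩
  rw [hTeq, tri_reverse (by omega), tri, show n - 3 - 0 = n - 2 - 1 by omega,
    show n - 2 - 1 + 1 = n - 2 by omega, show n - 2 - 1 + 2 = n - 2 + 1 by omega]

end FanOrd

/-! ### Duality -/

lemma IsFan.dual (hF : IsFan M F) : IsFan M✶ F :=
  hF.imp id fun ⟨n, e, h, hFe⟩ => ⟨n, e, h.dual, hFe⟩

lemma MaximalFan.dual (hF : MaximalFan M F) : MaximalFan M✶ F :=
  ⟨hF.1.dual, fun F' hF' hsub => hF.2 F' (dual_dual M ▸ hF'.dual) hsub⟩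

/-- Shifting the cyclic order by one exchanges the positions of triangles and triads. -/
lemma IsWheelOrWhirl.of_dual (hW : IsWheelOrWhirl M✶) : IsWheelOrWhirl M := by
  obtain ⟨k, e, hk, hinj, hE, htri⟩ := hW
  have hm : 0 < 2 * k := by omega
  have hmod : ∀ a b, (a % (2 * k) + b) % (2 * k) = (a + b) % (2 * k) :=
    fun a b => Nat.mod_add_mod a _ b
  refine ⟨k, fun i => e ((i + 1) % (2 * k)), hk, fun i hi j hj hij => ?_, ?_, fun i hi => ?_⟩
  · have := Nat.ModEq.add_right_cancel' 1 (hinj (Nat.mod_lt _ hm) (Nat.mod_lt _ hm) hij)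
    rwa [Nat.ModEq, Nat.mod_eq_of_lt hi, Nat.mod_eq_of_lt hj] at this
  · rw [← dual_ground, hE]
    ext x
    simp only [mem_image, mem_Iio]
    constructor
    · rintro ⟨j, hj, rfl⟩
      refine ⟨(j + 2 * k - 1) % (2 * k), Nat.mod_lt _ hm, ?_⟩
      rw [hmod, show j + 2 * k - 1 + 1 = j + 2 * k by omega, Nat.add_mod_right,
        Nat.mod_eq_of_lt hj]
    · rintro ⟨i, -, rfl⟩
      exact ⟨_, Nat.mod_lt _ hm, rfl⟩
  have hj := htri ((i + 1) % (2 * k)) (Nat.mod_lt _ hm)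
  rw [Nat.mod_mod_of_dvd _ (dvd_mul_right 2 k)] at hj
  simp only [hmod, add_assoc] at hj ⊢
  exact ⟨fun _ => triad_dual_iff.1 (hj.2 (by omega)), fun _ => hj.1 (by omega)⟩

/-- In a maximal fan of length at least 4 in a 3-connected matroid that is not a
wheel or a whirl, any triangle (resp. triad) containing two consecutive fan
elements consists of three consecutive fan elements. -/
theorem stmt7 (M : Matroid α) [M.Finite] (hM : ThreeConnected M)
    (hW : ¬ IsWheelOrWhirl M) {n : ℕ} {e : ℕ → α} {F : Set α}
    (hord : FanOrd M n e) (hF : F = e '' Set.Iio n) (hmax : MaximalFan M F)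
    (hn : 4 ≤ n) :
    ∀ i, i + 1 < n →
      (∀ T, Triangle M T → e i ∈ T → e (i + 1) ∈ T →
        (1 ≤ i ∧ T = {e (i - 1), e i, e (i + 1)}) ∨
        (i + 2 < n ∧ T = {e i, e (i + 1), e (i + 2)})) ∧
      (∀ T, Triad M T → e i ∈ T → e (i + 1) ∈ T →
        (1 ≤ i ∧ T = {e (i - 1), e i, e (i + 1)}) ∨
        (i + 2 < n ∧ T = {e i, e (i + 1), e (i + 2)})) := by
  subst hF
  exact fun i hi =>
    ⟨fun T hT => hord.triangle_eq_of_mem hM hW hmax hn hi hT,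
      fun T hT => hord.dual.triangle_eq_of_mem hM.dual (mt IsWheelOrWhirl.of_dual hW) hmax.dual
        hn hi hT⟩

end DetPairs
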